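/- arXiv:2311.05624 — 2 statements merged into one kernel-verified Lean document; each statement's English description precedes it below -/
import Mathlib

section
/- Deciding whether some word of length n is accepted by a machine but not within the given time bound is undecidable: the predicate on triples (c, n, t) given by "∃ x < 2^n, (c.eval x).Dom ∧ ¬(Nat.Partrec.Code.evaln t c x).isSome" is not a computable predicate. -/
open Nat.Partrec (Code)
open Nat.Partrec.Code (evaln evaln_bound)

theorem Nat.Partrec.Code.evaln_zero (c : Code) (n : ℕ) : evaln 0 c n = Option.none :=
  Option.eq_none_iff_forall_not_mem.2 fun _ h => Nat.not_lt_zero n (evaln_bound h)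

/-- Halting on input `0` is the instance with word length `0` and time bound `0`: the only word
is `0`, and nothing halts within `0` steps. -/
theorem halting_manyOneReducible_haltsOnSomeWordAfter :
    (fun c : Code => (c.eval 0).Dom) ≤₀ fun p : Code × ℕ × ℕ =>
      ∃ x < 2 ^ p.2.1, (p.1.eval x).Dom ∧ ¬(evaln p.2.2 p.1 x).isSome := by
  refine ⟨fun c => (c, 0, 0), Computable.pair Computable.id (Computable.const _), fun c => ?_⟩
  simp only [pow_zero, Nat.lt_one_iff, exists_eq_left, Code.evaln_zero, Option.isSome_none,
    Bool.false_eq_true, not_false_eq_true, and_true]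

theorem limitwithsmallt_undecidable :
    ¬ ComputablePred (fun p : Nat.Partrec.Code × ℕ × ℕ =>
      ∃ x < 2 ^ p.2.1, (p.1.eval x).Dom ∧
        ¬ (Nat.Partrec.Code.evaln p.2.2 p.1 x).isSome) := fun h =>
  ComputablePred.halting_problem 0
    (ComputablePred.computable_of_manyOneReducible halting_manyOneReducible_haltsOnSomeWordAfter h)
end

section
/- Greedy prefix search succeeds: for every predicate P on Boolean strings and every n, if there exists a string of length n satisfying P, then there exists a string y of length n satisfying P such that for every position k < n, the k-th bit of y is true if and only if the prefix of y of length k extended by true can be completed to a string of length n satisfying P; formally: for P : List Bool → Prop and n : ℕ, (∃ x, x.length = n ∧ P x) → ∃ y, y.length = n ∧ P y ∧ ∀ k < n, (y.get? k = some true ↔ ∃ z, (y.take k ++ true :: z).length = n ∧ P (y.take k ++ true :: z)). -/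
/-!
Fix the bits from left to right, keeping the invariant that the current prefix still extends
to a solution of length `n`: set the next bit to `true` exactly when the prefix extended by
`true` is completable. If it is not, the completion that the invariant provides must continue
with `false`, so the invariant survives either way.
-/

namespace List

theorem take_length_eq_of_append_singleton_prefix {α : Type*} {p y : List α} {b : α}
    (h : p ++ [b] <+: y) : y.take p.length = p := by
  obtain ⟨t, rfl⟩ := h
  simp

theorem getElem?_length_eq_of_append_singleton_prefix {α : Type*} {p y : List α} {b : α}
    (h : p ++ [b] <+: y) : y[p.length]? = some b := by
  obtain ⟨t, rfl⟩ := h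
  simp

end List

def Completable (P : List Bool → Prop) (n : ℕ) (p : List Bool) : Prop :=
  ∃ z, (p ++ z).length = n ∧ P (p ++ z)

section Completable

variable {P : List Bool → Prop} {n : ℕ}

theorem Completable.append_singleton {p : List Bool} (hp : Completable P n p)
    (hlt : p.length < n) : ∃ b, Completable P n (p ++ [b]) := by
  obtain ⟨_ | ⟨b, z⟩, hlen, hP⟩ := hp
  · rw [List.append_nil] at hlen
    omega
  · exact ⟨b, z, by simpa using hlen, by simpa using hP⟩

theorem Completable.exists_append_singleton_greedy {p : List Bool} (hp : Completable P n p)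
    (hlt : p.length < n) :
    ∃ b : Bool, (b = true ↔ Completable P n (p ++ [true])) ∧ Completable P n (p ++ [b]) := by
  by_cases htrue : Completable P n (p ++ [true])
  · exact ⟨true, by simp [htrue], htrue⟩
  · obtain ⟨b, hb⟩ := hp.append_singleton hlt
    cases b
    · exact ⟨false, by simp [htrue], hb⟩
    · exact absurd hb htrue

theorem Completable.exists_greedy_completion {p : List Bool} (hp : Completable P n p) :
    ∃ y, y.length = n ∧ P y ∧ p <+: y ∧ ∀ k, p.length ≤ k → k < n →
      (y[k]? = some true ↔ Completable P n (y.take k ++ [true])) := by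
  induction hm : n - p.length generalizing p with
  | zero =>
    obtain ⟨z, hz, hP⟩ := hp
    exact ⟨p ++ z, hz, hP, List.prefix_append p z, fun k hk hkn => by omega⟩
  | succ m ih =>
    obtain ⟨b, hb, hpb⟩ := hp.exists_append_singleton_greedy (by omega)
    obtain ⟨y, hy, hP, hpre, hgreedy⟩ :=
      ih hpb (by rw [List.length_append, List.length_singleton]; omega)
    refine ⟨y, hy, hP, (List.prefix_append p [b]).trans hpre, fun k hk hkn => ?_⟩
    rcases hk.eq_or_lt with rfl | hlt
    · rw [List.getElem?_length_eq_of_append_singleton_prefix hpre,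
        List.take_length_eq_of_append_singleton_prefix hpre]
      simpa using hb
    · exact hgreedy k (by simpa using hlt) hkn

end Completable

theorem greedy_prefix_search (P : List Bool → Prop) (n : ℕ)
    (h : ∃ x, x.length = n ∧ P x) :
    ∃ y, y.length = n ∧ P y ∧
      ∀ k < n, (y[k]? = some true ↔
        ∃ z, (y.take k ++ true :: z).length = n ∧ P (y.take k ++ true :: z)) := by
  obtain ⟨y, hy, hP, -, hgreedy⟩ :=
    Completable.exists_greedy_completion (p := []) (by simpa [Completable] using h)
  refine ⟨y, hy, hP, fun k hk => ?_⟩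
  simpa [Completable] using hgreedy k (Nat.zero_le k) hk
end
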